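/- Let ρ, T > 0 and √ρ T − 2 tanh(√ρ T/2) > 0 (which always holds). For c₃ = (√ρ y − x tanh(√ρT/2))/(√ρT − 2 tanh(√ρT/2)), c₁ = (x − c₃)/sinh(√ρT), c₂ = −c₃/sinh(√ρT), the function δ(t) = c₁ sinh(√ρ t) + c₂ sinh(√ρ(T−t)) + c₃ satisfies δ(0) = 0, δ(T) = x, and ∫₀ᵀ δ(t) dt = y. -/

import Mathlib

open Real

/-!
Both boundary values are immediate. On `[0, T]` each sinh term integrates to `(cosh u - 1) / √ρ`
with `u = √ρ T`, and `(cosh u - 1) / sinh u = tanh (u / 2)`, so `∫ δ = y` becomes exactly the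
linear equation defining `c₃`. Its coefficient `u - 2 tanh (u / 2)` is positive because
`tanh v < v` for `v > 0`.
-/

lemma sinh_lt_mul_cosh {v : ℝ} (hv : 0 < v) : sinh v < v * cosh v := by
  have hmono : StrictMonoOn (fun w : ℝ => w * cosh w - sinh w) (Set.Ici 0) := by
    refine strictMonoOn_of_deriv_pos (convex_Ici 0) (by fun_prop) fun w hw => ?_
    rw [interior_Ici] at hw
    have hderiv : HasDerivAt (fun w : ℝ => w * cosh w - sinh w) (w * sinh w) w :=
      (((hasDerivAt_id' w).mul (hasDerivAt_cosh w)).sub (hasDerivAt_sinh w)).congr_deriv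
        (by ring)
    rw [hderiv.deriv]
    exact mul_pos hw (sinh_pos_iff.2 hw)
  simpa using hmono Set.self_mem_Ici (Set.mem_Ici.2 hv.le) hv

lemma tanh_lt_self {v : ℝ} (hv : 0 < v) : tanh v < v := by
  rw [tanh_eq_sinh_div_cosh, div_lt_iff₀ (cosh_pos v)]
  exact sinh_lt_mul_cosh hv

lemma tanh_half_eq_cosh_sub_one_div_sinh (u : ℝ) : tanh (u / 2) = (cosh u - 1) / sinh u := by
  obtain ⟨v, rfl⟩ : ∃ v, u = 2 * v := ⟨u / 2, by ring⟩
  rw [mul_div_cancel_left₀ v two_ne_zero, cosh_two_mul, sinh_two_mul, cosh_sq,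
    tanh_eq_sinh_div_cosh]
  rcases eq_or_ne (sinh v) 0 with h | h
  · simp [h]
  · field_simp
    ring

lemma integral_sinh_mul (s a b : ℝ) (hs : s ≠ 0) :
    ∫ t in a..b, sinh (s * t) = (cosh (s * b) - cosh (s * a)) / s := by
  have hderiv : ∀ t, HasDerivAt (fun t => cosh (s * t) / s) (sinh (s * t)) t := fun t =>
    (((hasDerivAt_cosh _).comp t ((hasDerivAt_id' t).const_mul s)).div_const s).congr_deriv
      (by field_simp)
  rw [intervalIntegral.integral_eq_sub_of_hasDerivAt (fun t _ => hderiv t)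
    ((by fun_prop : Continuous fun t => sinh (s * t)).intervalIntegrable _ _), sub_div]

lemma integral_sinh_mul_sub (s T : ℝ) (hs : s ≠ 0) :
    ∫ t in (0 : ℝ)..T, sinh (s * (T - t)) = (cosh (s * T) - 1) / s := by
  rw [intervalIntegral.integral_comp_sub_left (fun t => sinh (s * t)), sub_self, sub_zero,
    integral_sinh_mul s 0 T hs, mul_zero, cosh_zero]

lemma integral_sinh_combination (s T c₁ c₂ c₃ : ℝ) (hs : s ≠ 0) :
    ∫ t in (0 : ℝ)..T, (c₁ * sinh (s * t) + c₂ * sinh (s * (T - t)) + c₃) =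
      (c₁ + c₂) * (cosh (s * T) - 1) / s + T * c₃ := by
  have h₁ : IntervalIntegrable (fun t => c₁ * sinh (s * t)) MeasureTheory.volume 0 T :=
    (by fun_prop : Continuous _).intervalIntegrable _ _
  have h₂ : IntervalIntegrable (fun t => c₂ * sinh (s * (T - t))) MeasureTheory.volume 0 T :=
    (by fun_prop : Continuous _).intervalIntegrable _ _
  rw [intervalIntegral.integral_add (h₁.add h₂) intervalIntegrable_const,
    intervalIntegral.integral_add h₁ h₂, intervalIntegral.integral_const_mul,
    intervalIntegral.integral_const_mul, integral_sinh_mul s 0 T hs, integral_sinh_mul_sub s T hs,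
    intervalIntegral.integral_const, mul_zero, cosh_zero, smul_eq_mul, sub_zero]
  ring

theorem EL_solution_constraints (ρ T x y : ℝ) (hρ : 0 < ρ) (hT : 0 < T)
    (c₁ c₂ c₃ : ℝ)
    (hc₃ : c₃ = (Real.sqrt ρ * y - x * tanh (Real.sqrt ρ * T / 2)) /
      (Real.sqrt ρ * T - 2 * tanh (Real.sqrt ρ * T / 2)))
    (hc₁ : c₁ = (x - c₃) / sinh (Real.sqrt ρ * T))
    (hc₂ : c₂ = -c₃ / sinh (Real.sqrt ρ * T))
    (δ : ℝ → ℝ)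
    (hδ : δ = fun t => c₁ * sinh (Real.sqrt ρ * t) + c₂ * sinh (Real.sqrt ρ * (T - t)) + c₃) :
    δ 0 = 0 ∧ δ T = x ∧ (∫ t in (0 : ℝ)..T, δ t) = y := by
  subst hδ
  set s := √ρ
  have hs : 0 < s := sqrt_pos.2 hρ
  have hsT : 0 < s * T := mul_pos hs hT
  have hsinh : sinh (s * T) ≠ 0 := (sinh_pos_iff.2 hsT).ne'
  have hden : s * T - 2 * tanh (s * T / 2) ≠ 0 := by
    linarith [tanh_lt_self (half_pos hsT)]
  refine ⟨?_, ?_, ?_⟩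
  · simp [hc₂, hsinh]
  · simp [hc₁, hsinh]
  · have hsum : (c₁ + c₂) * (cosh (s * T) - 1) = (x - 2 * c₃) * tanh (s * T / 2) := by
      rw [tanh_half_eq_cosh_sub_one_div_sinh, hc₁, hc₂]
      field_simp
      ring
    beta_reduce
    rw [integral_sinh_combination s T c₁ c₂ c₃ hs.ne', hsum, hc₃]
    field_simp
    ring
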